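/- arXiv:1807.09058 — 2 statements merged into one kernel-verified Lean document; each statement's English description precedes it below -/
import Mathlib

section
/- The matrix G = I + Y/(λ-ξ) + Z/(λ-ξ*), where Y = (2iβ/|c|^2)[[c2 c2*, -c1 c2*],[-c1* c2, c1 c1*]] and Z = (-2iβ/|c|^2)[[c1 c1*, c1 c2*],[c1* c2, c2 c2*]], has eigenvalues (λ-ξ)/(λ-ξ*) and (λ-ξ*)/(λ-ξ), with ξ = α+iβ, β > 0. -/
/-!
With `u = (c1, c2)` and `P = u u* / |u|²` the orthogonal projection onto `ℂ u`, one has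
`Z = -(ξ - ξ*) P` and `Y = (ξ - ξ*) (1 - P)`, so `G = a P + b (1 - P)` with
`a = (λ-ξ)/(λ-ξ*)` and `b = (λ-ξ*)/(λ-ξ)`. For a nontrivial idempotent `p`, the element
`(μ - a) p + (μ - b) (1 - p)` is invertible, with inverse `(μ - a)⁻¹ p + (μ - b)⁻¹ (1 - p)`,
exactly when `μ ∉ {a, b}`.
-/

open Matrix

namespace IsIdempotentElem

variable {𝕜 A : Type*} [Field 𝕜] [Ring A] [Algebra 𝕜 A] {p : A}

theorem isUnit_smul_add_smul_one_sub_iff (hp : IsIdempotentElem p) (hp0 : p ≠ 0)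
    (hp1 : p ≠ 1) {s t : 𝕜} : IsUnit (s • p + t • (1 - p)) ↔ s ≠ 0 ∧ t ≠ 0 := by
  have hpq := hp.mul_one_sub_self
  have hqp := hp.one_sub_mul_self
  have hq := hp.one_sub
  refine ⟨fun hu => ⟨fun hs => hp0 ?_, fun ht => sub_ne_zero.mpr hp1.symm ?_⟩,
    fun ⟨hs, ht⟩ => isUnit_iff_exists.mpr ⟨s⁻¹ • p + t⁻¹ • (1 - p), ?_, ?_⟩⟩
  · refine hu.mul_right_eq_zero.mp ?_
    simp [hs, hqp]
  · refine hu.mul_right_eq_zero.mp ?_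
    simp [ht, hpq]
  all_goals
    simp only [add_mul, mul_add, smul_mul_smul_comm, hp.eq, hq.eq, hpq, hqp, smul_zero,
      add_zero, zero_add, mul_inv_cancel₀, inv_mul_cancel₀, hs, ht, ne_eq, not_false_eq_true,
      one_smul]
    abel

theorem spectrum_smul_add_smul_one_sub (hp : IsIdempotentElem p) (hp0 : p ≠ 0)
    (hp1 : p ≠ 1) (a b : 𝕜) : spectrum 𝕜 (a • p + b • (1 - p)) = {a, b} := by
  ext μ
  have : algebraMap 𝕜 A μ - (a • p + b • (1 - p)) = (μ - a) • p + (μ - b) • (1 - p) := by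
    rw [Algebra.algebraMap_eq_smul_one]; module
  rw [spectrum.mem_iff, this, hp.isUnit_smul_add_smul_one_sub_iff hp0 hp1]
  simp [sub_eq_zero, or_iff_not_and_not]

end IsIdempotentElem

namespace Matrix

variable {n R : Type*} [Fintype n] [Field R]

noncomputable def rankOneIdempotent (v w : n → R) : Matrix n n R :=
  (w ⬝ᵥ v)⁻¹ • vecMulVec v w

variable {v w : n → R}

theorem isIdempotentElem_rankOneIdempotent (h : w ⬝ᵥ v ≠ 0) :
    IsIdempotentElem (rankOneIdempotent v w) := by
  rw [IsIdempotentElem, rankOneIdempotent, smul_mul_smul_comm, vecMulVec_mul_vecMulVec,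
    vecMulVec_smul, smul_smul, mul_assoc, inv_mul_cancel₀ h, mul_one]

theorem trace_rankOneIdempotent (h : w ⬝ᵥ v ≠ 0) : trace (rankOneIdempotent v w) = 1 := by
  rw [rankOneIdempotent, trace_smul, trace_vecMulVec, dotProduct_comm v w, smul_eq_mul,
    inv_mul_cancel₀ h]

theorem div_smul_vecMulVec (x : R) :
    (x / (w ⬝ᵥ v)) • vecMulVec v w = x • rankOneIdempotent v w := by
  rw [rankOneIdempotent, smul_smul, div_eq_mul_inv]

theorem div_smul_smul_one_sub_vecMulVec [DecidableEq n] (h : w ⬝ᵥ v ≠ 0) (x : R) :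
    (x / (w ⬝ᵥ v)) • ((w ⬝ᵥ v) • 1 - vecMulVec v w) = x • (1 - rankOneIdempotent v w) := by
  rw [smul_sub, smul_smul, div_mul_cancel₀ _ h, div_smul_vecMulVec, smul_sub]

theorem spectrum_smul_rankOneIdempotent_add_smul_one_sub [DecidableEq n]
    (hn : (Fintype.card n : R) ≠ 1) (h : w ⬝ᵥ v ≠ 0) (a b : R) :
    spectrum R (a • rankOneIdempotent v w + b • (1 - rankOneIdempotent v w)) = {a, b} := by
  have htr := trace_rankOneIdempotent h
  refine (isIdempotentElem_rankOneIdempotent h).spectrum_smul_add_smul_one_sub ?_ ?_ a b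
  · intro h0
    simp [h0] at htr
  · intro h1
    simp [h1, hn] at htr

end Matrix

theorem vecMulVec_star_pair (c1 c2 : ℂ) :
    vecMulVec ![c1, c2] (star ![c1, c2]) =
      !![c1 * (starRingEnd ℂ) c1, c1 * (starRingEnd ℂ) c2;
         (starRingEnd ℂ) c1 * c2, c2 * (starRingEnd ℂ) c2] := by
  ext i j
  fin_cases i <;> fin_cases j <;> simp [vecMulVec_apply, mul_comm]

theorem star_dotProduct_pair (c1 c2 : ℂ) :
    star ![c1, c2] ⬝ᵥ ![c1, c2] = ((‖c1‖ ^ 2 + ‖c2‖ ^ 2 : ℝ) : ℂ) := by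
  simp [dotProduct, Fin.sum_univ_two, Complex.conj_mul']

theorem smul_one_sub_vecMulVec_star_pair (c1 c2 : ℂ) :
    (star ![c1, c2] ⬝ᵥ ![c1, c2]) • 1 - vecMulVec ![c1, c2] (star ![c1, c2]) =
      !![c2 * (starRingEnd ℂ) c2, -(c1 * (starRingEnd ℂ) c2);
         -((starRingEnd ℂ) c1 * c2), c1 * (starRingEnd ℂ) c1] := by
  rw [vecMulVec_star_pair]
  ext i j
  fin_cases i <;> fin_cases j <;> simp [dotProduct, Fin.sum_univ_two] <;> ring

theorem stmt_3_general (α β : ℝ) (c1 c2 : ℂ) (h1 : c1 ≠ 0)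
    (ξ : ℂ) (hξ : ξ = (α : ℂ) + (β : ℂ) * Complex.I)
    (lam : ℂ) (hl1 : lam ≠ ξ) (hl2 : lam ≠ (starRingEnd ℂ) ξ)
    (Y Z G : Matrix (Fin 2) (Fin 2) ℂ)
    (hY : Y = ((2 * Complex.I * (β : ℂ)) / ((‖c1‖ ^ 2 + ‖c2‖ ^ 2 : ℝ) : ℂ)) •
      !![c2 * (starRingEnd ℂ) c2, -(c1 * (starRingEnd ℂ) c2);
         -((starRingEnd ℂ) c1 * c2), c1 * (starRingEnd ℂ) c1])
    (hZ : Z = (-(2 * Complex.I * (β : ℂ)) / ((‖c1‖ ^ 2 + ‖c2‖ ^ 2 : ℝ) : ℂ)) •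
      !![c1 * (starRingEnd ℂ) c1, c1 * (starRingEnd ℂ) c2;
         (starRingEnd ℂ) c1 * c2, c2 * (starRingEnd ℂ) c2])
    (hG : G = 1 + (lam - ξ)⁻¹ • Y + (lam - (starRingEnd ℂ) ξ)⁻¹ • Z) :
    spectrum ℂ G =
      {(lam - ξ) / (lam - (starRingEnd ℂ) ξ), (lam - (starRingEnd ℂ) ξ) / (lam - ξ)} := by
  have hs : star ![c1, c2] ⬝ᵥ ![c1, c2] ≠ 0 := by
    have : 0 < ‖c1‖ := norm_pos_iff.mpr h1
    rw [star_dotProduct_pair]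
    exact_mod_cast (by positivity : (0 : ℝ) < ‖c1‖ ^ 2 + ‖c2‖ ^ 2).ne'
  have hd : 2 * Complex.I * β = ξ - (starRingEnd ℂ) ξ := by
    simp only [hξ, map_add, map_mul, Complex.conj_ofReal, Complex.conj_I]; ring
  rw [← star_dotProduct_pair, hd] at hY hZ
  rw [← smul_one_sub_vecMulVec_star_pair, div_smul_smul_one_sub_vecMulVec hs] at hY
  rw [← vecMulVec_star_pair, div_smul_vecMulVec] at hZ
  have ha : (lam - ξ) / (lam - (starRingEnd ℂ) ξ) =
      1 - (lam - (starRingEnd ℂ) ξ)⁻¹ * (ξ - (starRingEnd ℂ) ξ) := by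
    field_simp [sub_ne_zero.mpr hl2]; ring
  have hb : (lam - (starRingEnd ℂ) ξ) / (lam - ξ) =
      1 + (lam - ξ)⁻¹ * (ξ - (starRingEnd ℂ) ξ) := by
    field_simp [sub_ne_zero.mpr hl1]; ring
  rw [← spectrum_smul_rankOneIdempotent_add_smul_one_sub (by norm_num) hs, hG, hY, hZ, ha, hb]
  congr 1
  module

/-- The matrix `G = I + Y/(λ-ξ) + Z/(λ-ξ*)` has eigenvalues `(λ-ξ)/(λ-ξ*)` and
`(λ-ξ*)/(λ-ξ)`. -/
theorem stmt_3 (α β : ℝ) (hβ : 0 < β) (c1 c2 : ℂ) (h1 : c1 ≠ 0) (h2 : c2 ≠ 0)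
    (ξ : ℂ) (hξ : ξ = (α : ℂ) + (β : ℂ) * Complex.I)
    (lam : ℂ) (hl1 : lam ≠ ξ) (hl2 : lam ≠ (starRingEnd ℂ) ξ)
    (Y Z G : Matrix (Fin 2) (Fin 2) ℂ)
    (hY : Y = ((2 * Complex.I * (β : ℂ)) / ((‖c1‖ ^ 2 + ‖c2‖ ^ 2 : ℝ) : ℂ)) •
      !![c2 * (starRingEnd ℂ) c2, -(c1 * (starRingEnd ℂ) c2);
         -((starRingEnd ℂ) c1 * c2), c1 * (starRingEnd ℂ) c1])
    (hZ : Z = (-(2 * Complex.I * (β : ℂ)) / ((‖c1‖ ^ 2 + ‖c2‖ ^ 2 : ℝ) : ℂ)) •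
      !![c1 * (starRingEnd ℂ) c1, c1 * (starRingEnd ℂ) c2;
         (starRingEnd ℂ) c1 * c2, c2 * (starRingEnd ℂ) c2])
    (hG : G = 1 + (lam - ξ)⁻¹ • Y + (lam - (starRingEnd ℂ) ξ)⁻¹ • Z) :
    spectrum ℂ G =
      {(lam - ξ) / (lam - (starRingEnd ℂ) ξ), (lam - (starRingEnd ℂ) ξ) / (lam - ξ)} :=
  stmt_3_general α β c1 c2 h1 ξ hξ lam hl1 hl2 Y Z G hY hZ hG
end

section
/- For α = 0 and β > 0, the quartic polynomial in τ given by 16β⁶τ⁴ + (8β⁴χ² - 72β³χ + 108β²)τ² + (β²χ⁴ - 2βχ³) (the discriminant condition for the critical-point cubic 2τλ³ + χλ² + 2β²τλ + (β²χ - 2β) = 0) has a double root in τ² precisely when (χ,τ) = (9/(4β), ±3√3/(8β²)) among points with τ ≠ 0. -/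
/-! The discriminant factors as `-16β⁴(4βχ - 9)³`, so it vanishes exactly at `χ = 9/(4β)`.
There the quadratic in `τ²` is the perfect square `16β⁶(τ² - 27/(64β⁴))²`, whose only root
is `τ² = 27/(64β⁴)`, i.e. `τ = ±3√3/(8β²)`. -/

section

variable {K : Type*} [Field K]

theorem discrim_critical_eq (β χ : K) :
    discrim (16 * β ^ 6) (8 * β ^ 4 * χ ^ 2 - 72 * β ^ 3 * χ + 108 * β ^ 2)
        (β ^ 2 * χ ^ 4 - 2 * β * χ ^ 3) = -16 * β ^ 4 * (4 * β * χ - 9) ^ 3 := by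
  unfold discrim
  ring

theorem discrim_critical_eq_zero_iff [CharZero K] {β : K} (hβ : β ≠ 0) (χ : K) :
    discrim (16 * β ^ 6) (8 * β ^ 4 * χ ^ 2 - 72 * β ^ 3 * χ + 108 * β ^ 2)
        (β ^ 2 * χ ^ 4 - 2 * β * χ ^ 3) = 0 ↔ χ = 9 / (4 * β) := by
  rw [discrim_critical_eq, mul_eq_zero, pow_eq_zero_iff three_ne_zero, sub_eq_zero,
    eq_div_iff (by simpa using hβ), mul_comm χ]
  simp [hβ]

theorem critical_quartic_eq_sq [CharZero K] {β : K} (hβ : β ≠ 0) (τ : K) :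
    16 * β ^ 6 * τ ^ 4
        + (8 * β ^ 4 * (9 / (4 * β)) ^ 2 - 72 * β ^ 3 * (9 / (4 * β)) + 108 * β ^ 2) * τ ^ 2
        + (β ^ 2 * (9 / (4 * β)) ^ 4 - 2 * β * (9 / (4 * β)) ^ 3)
      = 16 * β ^ 6 * (τ ^ 2 - 27 / (64 * β ^ 4)) ^ 2 := by
  field_simp
  ring

end

theorem sq_eq_twentyseven_div_iff {β : ℝ} (hβ : β ≠ 0) (τ : ℝ) :
    τ ^ 2 = 27 / (64 * β ^ 4) ↔
      τ = 3 * Real.sqrt 3 / (8 * β ^ 2) ∨ τ = -(3 * Real.sqrt 3 / (8 * β ^ 2)) := by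
  have hsqrt : Real.sqrt 3 ^ 2 = 3 := Real.sq_sqrt (by norm_num)
  have hroot : (3 * Real.sqrt 3 / (8 * β ^ 2)) ^ 2 = 27 / (64 * β ^ 4) := by
    field_simp
    linear_combination 576 * hsqrt
  rw [← hroot, sq_eq_sq_iff_eq_or_eq_neg]

theorem stmt_10_general (β : ℝ) (hβ : 0 < β) (χ τ : ℝ) :
    ((8 * β ^ 4 * χ ^ 2 - 72 * β ^ 3 * χ + 108 * β ^ 2) ^ 2
        - 4 * (16 * β ^ 6) * (β ^ 2 * χ ^ 4 - 2 * β * χ ^ 3) = 0 ∧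
      16 * β ^ 6 * τ ^ 4 + (8 * β ^ 4 * χ ^ 2 - 72 * β ^ 3 * χ + 108 * β ^ 2) * τ ^ 2
        + (β ^ 2 * χ ^ 4 - 2 * β * χ ^ 3) = 0)
    ↔ (χ = 9 / (4 * β) ∧
        (τ = 3 * Real.sqrt 3 / (8 * β ^ 2) ∨ τ = -(3 * Real.sqrt 3 / (8 * β ^ 2)))) := by
  refine (and_congr_left' (discrim_critical_eq_zero_iff hβ.ne' χ)).trans
    (and_congr_right fun hχ ↦ ?_)
  subst hχ
  rw [critical_quartic_eq_sq hβ.ne', mul_eq_zero, pow_eq_zero_iff two_ne_zero,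
    sub_eq_zero, sq_eq_twentyseven_div_iff hβ.ne']
  simp [hβ.ne']

/-- For `α = 0`, `β > 0`, the quartic in `τ` (quadratic in `τ²`)
`16β⁶τ⁴ + (8β⁴χ² - 72β³χ + 108β²)τ² + (β²χ⁴ - 2βχ³)` has a double root in `τ²`
(with a nonzero real root `τ`) precisely when `(χ,τ) = (9/(4β), ±3√3/(8β²))`. -/
theorem stmt_10 (β : ℝ) (hβ : 0 < β) (χ τ : ℝ) (hχ : 0 < χ) (hτ : τ ≠ 0) :
    ((8 * β ^ 4 * χ ^ 2 - 72 * β ^ 3 * χ + 108 * β ^ 2) ^ 2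
        - 4 * (16 * β ^ 6) * (β ^ 2 * χ ^ 4 - 2 * β * χ ^ 3) = 0 ∧
      16 * β ^ 6 * τ ^ 4 + (8 * β ^ 4 * χ ^ 2 - 72 * β ^ 3 * χ + 108 * β ^ 2) * τ ^ 2
        + (β ^ 2 * χ ^ 4 - 2 * β * χ ^ 3) = 0)
    ↔ (χ = 9 / (4 * β) ∧
        (τ = 3 * Real.sqrt 3 / (8 * β ^ 2) ∨ τ = -(3 * Real.sqrt 3 / (8 * β ^ 2)))) :=
  stmt_10_general β hβ χ τ
end
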